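/- For the block-diagonal matrix M = [[P,0],[0,R]] with P, R nonnegative, rank_psd(M) = rank_psd(P) + rank_psd(R). -/

import Mathlib

open Matrix

/-- A psd factorization of size `k` of `M`: symmetric psd matrices `A i`, `B j`
with `M i j = trace (A i * B j)`. -/
def IsPsdFact {m n : Type*} (M : Matrix m n ℝ) {k : ℕ}
    (A : m → Matrix (Fin k) (Fin k) ℝ) (B : n → Matrix (Fin k) (Fin k) ℝ) : Prop :=
  (∀ i, (A i).PosSemidef) ∧ (∀ j, (B j).PosSemidef) ∧ ∀ i j, M i j = (A i * B j).trace

/-- `M` admits a psd factorization of size `k`. -/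
def HasPsdFact {m n : Type*} (M : Matrix m n ℝ) (k : ℕ) : Prop :=
  ∃ (A : m → Matrix (Fin k) (Fin k) ℝ) (B : n → Matrix (Fin k) (Fin k) ℝ), IsPsdFact M A B

/-- The psd rank of `M`: the smallest size of a psd factorization. -/
noncomputable def psdRank {m n : Type*} (M : Matrix m n ℝ) : ℕ :=
  sInf {k | HasPsdFact M k}

/-! A psd factorization `A, B` of `fromBlocks P 0 0 R` has `trace (A i * B j) = 0` across the
blocks, and for psd matrices this forces `A i * B j = 0`. Hence the column space `V` of the
factors `A (inl i)` is orthogonal to the columns of the factors `B (inr j)`. Compressing the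
`P`-part onto `V` and the `R`-part onto `Vᗮ` yields factorizations of sizes adding up to
`dim V + dim Vᗮ = k`; the reverse inequality is the direct sum of two factorizations. -/

open WithLp

open scoped ComplexOrder MatrixOrder in
theorem Matrix.PosSemidef.trace_mul_eq_zero_iff {n 𝕜 : Type*} [Fintype n] [RCLike 𝕜]
    {A B : Matrix n n 𝕜} (hA : A.PosSemidef) (hB : B.PosSemidef) :
    (A * B).trace = 0 ↔ A * B = 0 := by
  classical
  obtain ⟨L, rfl⟩ := CStarAlgebra.nonneg_iff_eq_star_mul_self.mp hA.nonneg
  obtain ⟨N, rfl⟩ := CStarAlgebra.nonneg_iff_eq_star_mul_self.mp hB.nonneg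
  refine ⟨fun h => ?_, fun h => by rw [h, trace_zero]⟩
  have hLN : L * star N = 0 := by
    rw [← trace_conjTranspose_mul_self_eq_zero_iff, ← h]
    simp only [star_eq_conjTranspose, conjTranspose_mul, conjTranspose_conjTranspose,
      Matrix.mul_assoc]
    rw [trace_mul_comm]
    simp only [Matrix.mul_assoc]
  calc star L * L * (star N * N) = star L * (L * star N) * N := by simp only [Matrix.mul_assoc]
    _ = 0 := by rw [hLN, Matrix.mul_zero, Matrix.zero_mul]

open scoped ComplexOrder in
theorem Matrix.PosSemidef.fromBlocks_zero {m n 𝕜 : Type*} [Fintype m] [Fintype n] [RCLike 𝕜]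
    {A : Matrix m m 𝕜} {D : Matrix n n 𝕜} (hA : A.PosSemidef) (hD : D.PosSemidef) :
    (fromBlocks A 0 0 D).PosSemidef := by
  refine posSemidef_iff_dotProduct_mulVec.mpr ⟨?_, fun x => ?_⟩
  · simp [IsHermitian, fromBlocks_conjTranspose, hA.1.eq, hD.1.eq]
  · rw [← Sum.elim_comp_inl_inr x, fromBlocks_mulVec]
    simp only [Function.star_sumElim, Matrix.zero_mulVec, add_zero, zero_add,
      sumElim_dotProduct_sumElim]
    exact add_nonneg (hA.dotProduct_mulVec_nonneg _) (hD.dotProduct_mulVec_nonneg _)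

theorem Matrix.trace_fromBlocks {m n R : Type*} [Fintype m] [Fintype n] [AddCommMonoid R]
    (A : Matrix m m R) (B : Matrix m n R) (C : Matrix n m R) (D : Matrix n n R) :
    (fromBlocks A B C D).trace = A.trace + D.trace := by
  simp [trace, Fintype.sum_sum_type]

theorem Submodule.exists_mul_transpose_mulVec_eq_of_mem {k : ℕ}
    (V : Submodule ℝ (EuclideanSpace ℝ (Fin k))) :
    ∃ Q : Matrix (Fin k) (Fin (Module.finrank ℝ V)) ℝ,
      ∀ x, toLp 2 x ∈ V → (Q * Qᵀ) *ᵥ x = x := by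
  set b := stdOrthonormalBasis ℝ V
  refine ⟨(of fun t => ofLp (b t : EuclideanSpace ℝ (Fin k)))ᵀ, fun x hx => ?_⟩
  have hrepr := congrArg (fun v : V => ofLp (v : EuclideanSpace ℝ (Fin k)))
    (b.sum_repr' ⟨toLp 2 x, hx⟩)
  simp only [Submodule.coe_sum, Submodule.coe_smul, Submodule.coe_inner, WithLp.ofLp_sum,
    WithLp.ofLp_smul, EuclideanSpace.inner_eq_star_dotProduct, star_trivial] at hrepr
  rw [← mulVec_mulVec, mulVec_transpose, vecMul_eq_sum]
  refine Eq.trans (Finset.sum_congr rfl fun t _ => ?_) hrepr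
  rw [transpose_transpose, mulVec, dotProduct_comm]
  rfl

theorem Matrix.inner_toLp_mulVec_toLp_mulVec_eq_zero {ι κ μ 𝕜 : Type*} [Fintype ι] [Fintype κ]
    [Fintype μ] [RCLike 𝕜] {A : Matrix ι κ 𝕜} {B : Matrix ι μ 𝕜} (h : Aᴴ * B = 0)
    (x : κ → 𝕜) (y : μ → 𝕜) : inner 𝕜 (toLp 2 (A *ᵥ x)) (toLp 2 (B *ᵥ y)) = 0 := by
  rw [EuclideanSpace.inner_toLp_toLp, star_mulVec, dotProduct_comm, ← dotProduct_mulVec,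
    mulVec_mulVec, h, zero_mulVec, dotProduct_zero]

section PsdFact

variable {m n : Type*}

theorem HasPsdFact.psdRank_le {M : Matrix m n ℝ} {k : ℕ} (h : HasPsdFact M k) :
    psdRank M ≤ k :=
  Nat.sInf_le h

theorem HasPsdFact.hasPsdFact_psdRank {M : Matrix m n ℝ} {k : ℕ} (h : HasPsdFact M k) :
    HasPsdFact M (psdRank M) :=
  Nat.sInf_mem (s := {k | HasPsdFact M k}) ⟨k, h⟩

theorem IsPsdFact.transpose {M : Matrix m n ℝ} {k : ℕ} {A : m → Matrix (Fin k) (Fin k) ℝ}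
    {B : n → Matrix (Fin k) (Fin k) ℝ} (h : IsPsdFact M A B) : IsPsdFact Mᵀ B A :=
  ⟨h.2.1, h.1, fun j i => by rw [transpose_apply, h.2.2, trace_mul_comm]⟩

theorem HasPsdFact.of_transpose {M : Matrix m n ℝ} {k : ℕ} (h : HasPsdFact Mᵀ k) :
    HasPsdFact M k :=
  let ⟨A, B, hAB⟩ := h
  ⟨B, A, hAB.transpose⟩

theorem hasPsdFact_card {ι : Type*} [Fintype ι] {M : Matrix m n ℝ} (A : m → Matrix ι ι ℝ)
    (B : n → Matrix ι ι ℝ) (hA : ∀ i, (A i).PosSemidef) (hB : ∀ j, (B j).PosSemidef)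
    (hM : ∀ i j, M i j = (A i * B j).trace) : HasPsdFact M (Fintype.card ι) := by
  set e := (Fintype.equivFin ι).symm
  refine ⟨fun i => (A i).submatrix e e, fun j => (B j).submatrix e e,
    fun i => (hA i).submatrix e, fun j => (hB j).submatrix e, fun i j => ?_⟩
  rw [submatrix_mul_equiv, hM, trace, trace, ← e.sum_comp]
  rfl

theorem hasPsdFact_of_nonneg [Fintype n] [DecidableEq n] {M : Matrix m n ℝ}
    (hM : ∀ i j, 0 ≤ M i j) : HasPsdFact M (Fintype.card n) := by
  refine hasPsdFact_card (fun i => diagonal (M i)) (fun j => diagonal (Pi.single j 1))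
    (fun i => .diagonal (hM i)) (fun j => .diagonal fun t => ?_) fun i j => ?_
  · by_cases htj : t = j <;> simp [htj]
  · simp [trace_diagonal, Pi.single_apply]

theorem HasPsdFact.fromBlocks {m' n' : Type*} {P : Matrix m n ℝ} {R : Matrix m' n' ℝ}
    {a b : ℕ} (hP : HasPsdFact P a) (hR : HasPsdFact R b) :
    HasPsdFact (fromBlocks P 0 0 R) (a + b) := by
  obtain ⟨A, B, hA, hB, hAB⟩ := hP
  obtain ⟨C, D, hC, hD, hCD⟩ := hR
  have := hasPsdFact_card (M := Matrix.fromBlocks P 0 0 R)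
    (Sum.elim (fun i => Matrix.fromBlocks (A i) 0 0 0) fun i => Matrix.fromBlocks 0 0 0 (C i))
    (Sum.elim (fun j => Matrix.fromBlocks (B j) 0 0 0) fun j => Matrix.fromBlocks 0 0 0 (D j))
    (Sum.rec (fun i => (hA i).fromBlocks_zero .zero) fun i => .fromBlocks_zero .zero (hC i))
    (Sum.rec (fun j => (hB j).fromBlocks_zero .zero) fun j => .fromBlocks_zero .zero (hD j))
    (by rintro (i | i) (j | j) <;> simp [fromBlocks_multiply, trace_fromBlocks, hAB, hCD])
  simpa using this

theorem IsPsdFact.hasPsdFact_finrank {M : Matrix m n ℝ} {k : ℕ}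
    {A : m → Matrix (Fin k) (Fin k) ℝ} {B : n → Matrix (Fin k) (Fin k) ℝ} (h : IsPsdFact M A B)
    (V : Submodule ℝ (EuclideanSpace ℝ (Fin k))) (hV : ∀ i x, toLp 2 (A i *ᵥ x) ∈ V) :
    HasPsdFact M (Module.finrank ℝ V) := by
  obtain ⟨hA, hB, hM⟩ := h
  -- `Q * Qᵀ` is the orthogonal projection onto `V`, so it fixes each `A i` on both sides.
  obtain ⟨Q, hQ⟩ := V.exists_mul_transpose_mulVec_eq_of_mem
  have hQA : ∀ i, Q * Qᵀ * A i = A i := fun i =>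
    ext_iff_mulVec.mpr fun x => by rw [← mulVec_mulVec, hQ _ (hV i x)]
  have hAQ : ∀ i, A i * (Q * Qᵀ) = A i := fun i => by
    have hAT : (A i)ᵀ = A i := by rw [← conjTranspose_eq_transpose_of_trivial]; exact (hA i).1.eq
    simpa [transpose_mul, hAT] using congrArg Matrix.transpose (hQA i)
  refine ⟨fun i => Qᵀ * A i * Q, fun j => Qᵀ * B j * Q, fun i => ?_, fun j => ?_, fun i j => ?_⟩
  · simpa using (hA i).conjTranspose_mul_mul_same Q
  · simpa using (hB j).conjTranspose_mul_mul_same Q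
  · calc M i j = (Q * Qᵀ * A i * (Q * Qᵀ) * B j).trace := by rw [hQA, hAQ, hM]
      _ = (Qᵀ * A i * Q * (Qᵀ * B j * Q)).trace := by
        rw [show Qᵀ * A i * Q * (Qᵀ * B j * Q) = Qᵀ * A i * Q * Qᵀ * B j * Q by
          simp only [Matrix.mul_assoc], trace_mul_comm _ Q]
        simp only [Matrix.mul_assoc]

theorem HasPsdFact.exists_add_eq_of_fromBlocks {m' n' : Type*} {P : Matrix m n ℝ}
    {R : Matrix m' n' ℝ} {k : ℕ} (h : HasPsdFact (Matrix.fromBlocks P 0 0 R) k) :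
    ∃ u w, u + w = k ∧ HasPsdFact P u ∧ HasPsdFact R w := by
  obtain ⟨A, B, hA, hB, hM⟩ := h
  have hAB : ∀ i j, A (.inl i) * B (.inr j) = 0 := fun i j =>
    ((hA _).trace_mul_eq_zero_iff (hB _)).mp (by simpa using (hM (.inl i) (.inr j)).symm)
  set V := Submodule.span ℝ (Set.range fun p : m × (Fin k → ℝ) => toLp 2 (A (.inl p.1) *ᵥ p.2))
  set W := Submodule.span ℝ (Set.range fun p : n' × (Fin k → ℝ) => toLp 2 (B (.inr p.1) *ᵥ p.2))
  have hVW : V ⟂ W := by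
    refine Submodule.isOrtho_span.mpr ?_
    rintro _ ⟨⟨i, x⟩, rfl⟩ _ ⟨⟨j, y⟩, rfl⟩
    exact inner_toLp_mulVec_toLp_mulVec_eq_zero (by rw [(hA _).1.eq, hAB]) x y
  have hP : HasPsdFact P (Module.finrank ℝ V) :=
    IsPsdFact.hasPsdFact_finrank (A := fun i => A (.inl i)) (B := fun j => B (.inl j))
      ⟨fun i => hA _, fun j => hB _, fun i j => by simpa using hM (.inl i) (.inl j)⟩
      V fun i x => Submodule.subset_span ⟨(i, x), rfl⟩
  have hR : HasPsdFact Rᵀ (Module.finrank ℝ Vᗮ) :=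
    IsPsdFact.hasPsdFact_finrank (A := fun j => B (.inr j)) (B := fun i => A (.inr i))
      ⟨fun j => hB _, fun i => hA _,
        fun j i => by rw [trace_mul_comm]; simpa using hM (.inr i) (.inr j)⟩
      Vᗮ fun j y => Submodule.isOrtho_iff_le.mp hVW.symm (Submodule.subset_span ⟨(j, y), rfl⟩)
  exact ⟨_, _, V.finrank_add_finrank_orthogonal.trans finrank_euclideanSpace_fin,
    hP, hR.of_transpose⟩

end PsdFact

theorem psdRank_blockDiagonal {p₁ p₂ q₁ q₂ : ℕ}
    (P : Matrix (Fin p₁) (Fin q₁) ℝ) (R : Matrix (Fin p₂) (Fin q₂) ℝ)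
    (hP : ∀ i j, 0 ≤ P i j) (hR : ∀ i j, 0 ≤ R i j) :
    psdRank (Matrix.fromBlocks P 0 0 R) = psdRank P + psdRank R := by
  -- Nonnegativity supplies factorizations, so each `psdRank` is attained (not `sInf ∅ = 0`).
  have hPmin := (hasPsdFact_of_nonneg hP).hasPsdFact_psdRank
  have hRmin := (hasPsdFact_of_nonneg hR).hasPsdFact_psdRank
  obtain ⟨u, w, huw, hu, hw⟩ :=
    (hPmin.fromBlocks hRmin).hasPsdFact_psdRank.exists_add_eq_of_fromBlocks
  refine le_antisymm (hPmin.fromBlocks hRmin).psdRank_le ?_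
  rw [← huw]
  exact add_le_add hu.psdRank_le hw.psdRank_le
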